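/- Let A be a densely defined closed C-symmetric operator, B = CAC, M_{B*} = N(I + A*CA*C), M_{A*} = N(I + CA*CA*). Then B* maps M_{B*} onto M_{A*}, A* maps M_{A*} onto M_{B*}, and C maps M_{B*} onto M_{A*}. -/

import Mathlib

open scoped InnerProductSpace
open LinearPMap

variable {H : Type*} [NormedAddCommGroup H] [InnerProductSpace ℂ H]

/-- A conjugation on a complex inner product space: a conjugate-linear involution
satisfying `⟪Cx, Cy⟫ = ⟪y, x⟫`. -/
structure Conjugation (H : Type*) [NormedAddCommGroup H] [InnerProductSpace ℂ H] where
  toFun : H → H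
  map_add' : ∀ x y, toFun (x + y) = toFun x + toFun y
  map_smulc : ∀ (c : ℂ) (x : H), toFun (c • x) = (starRingEnd ℂ c) • toFun x
  invol : ∀ x, toFun (toFun x) = x
  inner_conj : ∀ x y, ⟪toFun x, toFun y⟫_ℂ = ⟪y, x⟫_ℂ

namespace Conjugation

instance : CoeFun (Conjugation H) fun _ => H → H := ⟨toFun⟩

lemma map_zero (C : Conjugation H) : C 0 = 0 := by
  have := C.map_smulc 0 0; simpa using this

lemma mem_of_mem_image (C : Conjugation H) {S : Set H} {x : H} (hx : x ∈ C.toFun '' S) :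
    C x ∈ S := by
  obtain ⟨t, ht, rfl⟩ := hx
  rwa [C.invol]

/-- The image `C(D)` of a subspace under a conjugation, as a subspace. -/
def conjDomain (C : Conjugation H) (D : Submodule ℂ H) : Submodule ℂ H where
  carrier := C.toFun '' (D : Set H)
  add_mem' := by
    rintro a b ⟨x, hx, rfl⟩ ⟨y, hy, rfl⟩
    exact ⟨x + y, D.add_mem hx hy, (C.map_add' x y).symm ▸ rfl⟩
  zero_mem' := ⟨0, D.zero_mem, C.map_zero⟩
  smul_mem' := by
    rintro c a ⟨x, hx, rfl⟩
    refine ⟨(starRingEnd ℂ c) • x, D.smul_mem _ hx, ?_⟩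
    rw [C.map_smulc]; simp

lemma conj_mem (C : Conjugation H) {D : Submodule ℂ H} {x : H} (hx : x ∈ C.conjDomain D) :
    C x ∈ D := C.mem_of_mem_image hx

/-- The operator `C T C` with domain `C(D(T))`. -/
noncomputable def conjOp (C : Conjugation H) (T : H →ₗ.[ℂ] H) : H →ₗ.[ℂ] H where
  domain := C.conjDomain T.domain
  toFun :=
  { toFun := fun x => C (T ⟨C ↑x, C.conj_mem x.2⟩)
    map_add' := by
      intro x y
      have h : (⟨C ↑(x + y), C.conj_mem (x + y).2⟩ : T.domain)
          = ⟨C ↑x, C.conj_mem x.2⟩ + ⟨C ↑y, C.conj_mem y.2⟩ := by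
        apply Subtype.ext; simp [C.map_add']
      try dsimp only
      rw [h, T.map_add, C.map_add']
    map_smul' := by
      intro c x
      have h : (⟨C ↑(c • x), C.conj_mem (c • x).2⟩ : T.domain)
          = (starRingEnd ℂ c) • (⟨C ↑x, C.conj_mem x.2⟩ : T.domain) := by
        apply Subtype.ext; simp [C.map_smulc]
      try dsimp only
      rw [h, T.map_smul, C.map_smulc]; simp }

/-- `A` is `C`-symmetric: `CAC ⊆ A*`. -/
noncomputable def IsCSymmetric [CompleteSpace H] (C : Conjugation H) (A : H →ₗ.[ℂ] H) : Prop :=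
  C.conjOp A ≤ A†

/-- `A` is `C`-self-adjoint: `CAC = A*`. -/
noncomputable def IsCSelfAdjoint [CompleteSpace H] (C : Conjugation H) (A : H →ₗ.[ℂ] H) : Prop :=
  C.conjOp A = A†

end Conjugation
variable [CompleteSpace H]

open scoped InnerProductSpace in
/-- The kernel `N(I + A*CA*C)`. -/
noncomputable def kerIplusAstarCAstarC (C : Conjugation H) (A : H →ₗ.[ℂ] H) : Set H :=
  {g | ∃ hg : g ∈ (C.conjOp (A†)).domain, ∃ h2 : (C.conjOp (A†)) ⟨g, hg⟩ ∈ (A†).domain,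
      g + A† ⟨(C.conjOp (A†)) ⟨g, hg⟩, h2⟩ = 0}

/-- The kernel `N(I + CA*CA*)`. -/
noncomputable def kerIplusCAstarCAstar (C : Conjugation H) (A : H →ₗ.[ℂ] H) : Set H :=
  {g | ∃ hg : g ∈ (A†).domain, ∃ h2 : A† ⟨g, hg⟩ ∈ (C.conjOp (A†)).domain,
      g + (C.conjOp (A†)) ⟨A† ⟨g, hg⟩, h2⟩ = 0}

/-- The kernel `N(I + A*B*)` where `B = CAC`. -/
noncomputable def kerIplusAstarBstar (C : Conjugation H) (A : H →ₗ.[ℂ] H) : Set H :=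
  {g | ∃ hg : g ∈ ((C.conjOp A)†).domain, ∃ h2 : (C.conjOp A)† ⟨g, hg⟩ ∈ (A†).domain,
      g + A† ⟨(C.conjOp A)† ⟨g, hg⟩, h2⟩ = 0}

open scoped InnerProductSpace in
/-- The orthogonal complement of `S` within `W`, with respect to the graph inner
product `⟪f, g⟫ + ⟪Tf, Tg⟫` of `T`. -/
def graphOrthComplIn (T : H →ₗ.[ℂ] H) (W S : Set H) : Set H :=
  {g | g ∈ W ∧ ∃ hg : g ∈ T.domain, ∀ f ∈ S, ∀ hf : f ∈ T.domain,
      ⟪f, g⟫_ℂ + ⟪T ⟨f, hf⟩, T ⟨g, hg⟩⟫_ℂ = 0}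

/-- The deficiency space `N(T* - μ)`. -/
noncomputable def defectSpace (T : H →ₗ.[ℂ] H) (μ : ℂ) : Submodule ℂ H where
  carrier := {z | ∃ hz : z ∈ (T†).domain, T† ⟨z, hz⟩ = μ • z}
  add_mem' := by
    rintro a b ⟨ha, hva⟩ ⟨hb, hvb⟩
    refine ⟨(T†).domain.add_mem ha hb, ?_⟩
    have h : (⟨a + b, (T†).domain.add_mem ha hb⟩ : (T†).domain) = ⟨a, ha⟩ + ⟨b, hb⟩ := rfl
    rw [h, LinearPMap.map_add, hva, hvb, smul_add]
  zero_mem' := by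
    refine ⟨(T†).domain.zero_mem, ?_⟩
    have h : (⟨(0 : H), (T†).domain.zero_mem⟩ : (T†).domain) = 0 := rfl
    rw [h, LinearPMap.map_zero, smul_zero]
  smul_mem' := by
    rintro c a ⟨ha, hva⟩
    refine ⟨(T†).domain.smul_mem c ha, ?_⟩
    have h : (⟨c • a, (T†).domain.smul_mem c ha⟩ : (T†).domain) = c • ⟨a, ha⟩ := rfl
    rw [h, LinearPMap.map_smul, hva, smul_comm]


/-!
Since `B* = C A* C` for densely defined `A`, the three claims are instances of two facts about
arbitrary partially defined operators: `S` maps `N(I + T S)` onto `N(I + S T)`, with inverse `-T`,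
and a conjugation `C` maps `N(I + T (C T C))` onto `N(I + (C T C) T)`. Both are read off graphs:
`g ∈ N(I + T S)` iff `(g, y) ∈ Γ(S)` and `(y, -g) ∈ Γ(T)` for some `y`.
-/

namespace LinearPMap

variable {R M : Type*} [Ring R] [AddCommGroup M] [Module R M]

/-- `N(I + T S)`, where `T S` is defined on `{g ∈ D(S) | S g ∈ D(T)}`. -/
def kerOneAddComp (T S : M →ₗ.[R] M) : Set M :=
  {g | ∃ hg : g ∈ S.domain, ∃ h2 : S ⟨g, hg⟩ ∈ T.domain, g + T ⟨S ⟨g, hg⟩, h2⟩ = 0}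

lemma mem_kerOneAddComp_iff {T S : M →ₗ.[R] M} {g : M} :
    g ∈ kerOneAddComp T S ↔ ∃ y, (g, y) ∈ S.graph ∧ (y, -g) ∈ T.graph := by
  constructor
  · rintro ⟨hg, h2, h⟩
    refine ⟨S ⟨g, hg⟩, S.mem_graph ⟨g, hg⟩, ?_⟩
    simpa only [eq_neg_of_add_eq_zero_right h] using T.mem_graph ⟨_, h2⟩
  · rintro ⟨y, hgy, hyg⟩
    obtain ⟨⟨_, hg⟩, rfl, rfl⟩ := (mem_graph_iff S).1 hgy
    obtain ⟨⟨_, h2⟩, rfl, hT⟩ := (mem_graph_iff T).1 hyg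
    exact ⟨hg, h2, by rw [hT, add_neg_cancel]⟩

lemma image_kerOneAddComp (S T : M →ₗ.[R] M) :
    {x | ∃ g ∈ kerOneAddComp T S, ∃ hg : g ∈ S.domain, S ⟨g, hg⟩ = x} = kerOneAddComp S T := by
  ext x
  simp only [Set.mem_ofPred_eq, mem_kerOneAddComp_iff]
  constructor
  · rintro ⟨g, ⟨y, hgy, hyg⟩, hg, rfl⟩
    obtain rfl : y = S ⟨g, hg⟩ := S.mem_graph_snd_inj hgy (S.mem_graph ⟨g, hg⟩) rfl
    exact ⟨-g, hyg, by simpa using S.graph.neg_mem (S.mem_graph ⟨g, hg⟩)⟩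
  · rintro ⟨z, hxz, hzx⟩
    have hS : (-z, x) ∈ S.graph := by simpa using S.graph.neg_mem hzx
    exact ⟨-z, ⟨x, hS, by simpa using hxz⟩, mem_domain_of_mem_graph hS,
      ((image_iff _).2 hS).symm⟩

end LinearPMap

namespace Conjugation

section InnerProductSpace

variable {E : Type*} [NormedAddCommGroup E] [InnerProductSpace ℂ E] (C : Conjugation E)

lemma map_neg (x : E) : C (-x) = -C x := by
  simpa using C.map_smulc (-1) x

lemma map_sub (x y : E) : C (x - y) = C x - C y := by
  rw [sub_eq_add_neg, sub_eq_add_neg, C.map_add', C.map_neg]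

lemma norm_map (x : E) : ‖C x‖ = ‖x‖ := by
  rw [norm_eq_sqrt_re_inner (𝕜 := ℂ), norm_eq_sqrt_re_inner (𝕜 := ℂ), C.inner_conj]

lemma inner_map_map (x y : E) : ⟪C x, C y⟫_ℂ = starRingEnd ℂ ⟪x, y⟫_ℂ := by
  rw [C.inner_conj, inner_conj_symm]

lemma inner_map_right (x y : E) : ⟪x, C y⟫_ℂ = starRingEnd ℂ ⟪C x, y⟫_ℂ := by
  rw [← C.inner_map_map, C.invol]

lemma mem_image_iff {S : Set E} {x : E} : x ∈ C.toFun '' S ↔ C x ∈ S :=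
  ⟨C.mem_of_mem_image, fun h => ⟨C x, h, C.invol x⟩⟩

lemma dense_image {D : Set E} (hD : Dense D) : Dense (C.toFun '' D) := by
  intro y
  rw [Metric.mem_closure_iff]
  intro ε hε
  obtain ⟨b, hb, hdist⟩ := Metric.mem_closure_iff.mp (hD (C y)) ε hε
  refine ⟨C b, ⟨b, hb, rfl⟩, ?_⟩
  rwa [dist_eq_norm, ← C.invol y, ← C.map_sub, C.norm_map, ← dist_eq_norm]

lemma mem_graph_conjOp {T : E →ₗ.[ℂ] E} {x y : E} :
    (x, y) ∈ (C.conjOp T).graph ↔ (C x, C y) ∈ T.graph := by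
  simp only [mem_graph_iff]
  constructor
  · rintro ⟨⟨x', hx'⟩, rfl, rfl⟩
    exact ⟨⟨C x', C.conj_mem hx'⟩, rfl, (C.invol _).symm⟩
  · rintro ⟨⟨_, hx⟩, rfl, hy⟩
    refine ⟨⟨x, C x, hx, C.invol x⟩, rfl, ?_⟩
    change C (T ⟨C x, hx⟩) = y
    rw [hy, C.invol]

lemma image_kerOneAddComp_conjOp (T : E →ₗ.[ℂ] E) :
    C.toFun '' kerOneAddComp T (C.conjOp T) = kerOneAddComp (C.conjOp T) T := by
  ext x
  simp only [C.mem_image_iff, mem_kerOneAddComp_iff, C.mem_graph_conjOp, C.invol, C.map_neg]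
  constructor
  · rintro ⟨y, hxy, hyx⟩
    exact ⟨C y, hxy, by rwa [C.invol]⟩
  · rintro ⟨z, hxz, hzx⟩
    exact ⟨C z, by rwa [C.invol], hzx⟩

end InnerProductSpace

lemma adjoint_conjOp (C : Conjugation H) (A : H →ₗ.[ℂ] H) (hA : Dense (A.domain : Set H)) :
    (C.conjOp A)† = C.conjOp (A†) := by
  refine eq_of_eq_graph (Submodule.ext fun ⟨y, w⟩ => ?_)
  rw [C.mem_graph_conjOp, adjoint_graph_eq_graph_adjoint (C.dense_image hA),
    adjoint_graph_eq_graph_adjoint hA, Submodule.mem_adjoint_iff, Submodule.mem_adjoint_iff]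
  constructor
  · intro h a b hab
    have hab' : (C a, C b) ∈ (C.conjOp A).graph :=
      C.mem_graph_conjOp.2 (by rwa [C.invol, C.invol])
    rw [C.inner_map_right, C.inner_map_right, ← _root_.map_sub, h _ _ hab', _root_.map_zero]
  · intro h a b hab
    have := h _ _ (C.mem_graph_conjOp.1 hab)
    rwa [C.inner_map_map, C.inner_map_map, ← _root_.map_sub, map_eq_zero] at this

end Conjugation

theorem stmt_5_general (C : Conjugation H) (A : H →ₗ.[ℂ] H) (hA : Dense (A.domain : Set H)) :
    {x : H | ∃ g ∈ kerIplusAstarCAstarC C A,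
        ∃ hg : g ∈ ((C.conjOp A)†).domain, (C.conjOp A)† ⟨g, hg⟩ = x}
      = kerIplusCAstarCAstar C A
    ∧ {x : H | ∃ g ∈ kerIplusCAstarCAstar C A,
        ∃ hg : g ∈ (A†).domain, A† ⟨g, hg⟩ = x}
      = kerIplusAstarCAstarC C A
    ∧ C.toFun '' kerIplusAstarCAstarC C A = kerIplusCAstarCAstar C A := by
  refine ⟨?_, image_kerOneAddComp (A†) (C.conjOp (A†)), C.image_kerOneAddComp_conjOp (A†)⟩
  rw [C.adjoint_conjOp A hA]
  exact image_kerOneAddComp (C.conjOp (A†)) (A†)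

theorem stmt_5 (C : Conjugation H) (A : H →ₗ.[ℂ] H) (hA : Dense (A.domain : Set H))
    (hclosed : A.IsClosed) (hsym : C.IsCSymmetric A) :
    {x : H | ∃ g ∈ kerIplusAstarCAstarC C A,
        ∃ hg : g ∈ ((C.conjOp A)†).domain, (C.conjOp A)† ⟨g, hg⟩ = x}
      = kerIplusCAstarCAstar C A
    ∧ {x : H | ∃ g ∈ kerIplusCAstarCAstar C A,
        ∃ hg : g ∈ (A†).domain, A† ⟨g, hg⟩ = x}
      = kerIplusAstarCAstarC C A
    ∧ C.toFun '' kerIplusAstarCAstarC C A = kerIplusCAstarCAstar C A :=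
  stmt_5_general C A hA
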